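/- For (x1,x2) with β(x1,x2) ≠ 0, F(x1,x2) = P(x1,x2) D(x1,x2) P(x1,x2)^{-1}, where D = diag(√β/3, −√β/3), P = [[1, 1],[√β/(1+e^{-i x1}+e^{-i x2}), −(1+e^{i x1}+e^{i x2})/√β]], and P^{-1} = [[1/2, (1+e^{-i x1}+e^{-i x2})/(2√β)],[1/2, −(1+e^{-i x1}+e^{-i x2})/(2√β)]]. -/

import Mathlib

open Real Complex

noncomputable def hexF (x1 x2 : ℝ) : Matrix (Fin 2) (Fin 2) ℂ :=
  (1/3 : ℂ) •
    !![0, 1 + Complex.exp (-(Complex.I * x1)) + Complex.exp (-(Complex.I * x2));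
       1 + Complex.exp (Complex.I * x1) + Complex.exp (Complex.I * x2), 0]

noncomputable def hexβ (x1 x2 : ℝ) : ℝ :=
  3 + 2 * (Real.cos x1 + Real.cos x2 + Real.cos (x1 - x2))

noncomputable def hexD (x1 x2 : ℝ) : Matrix (Fin 2) (Fin 2) ℂ :=
  !![(Real.sqrt (hexβ x1 x2) : ℂ) / 3, 0;
     0, -((Real.sqrt (hexβ x1 x2) : ℂ) / 3)]

noncomputable def hexP (x1 x2 : ℝ) : Matrix (Fin 2) (Fin 2) ℂ :=
  !![1, 1;
     (Real.sqrt (hexβ x1 x2) : ℂ) /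
       (1 + Complex.exp (-(Complex.I * x1)) + Complex.exp (-(Complex.I * x2))),
     -((1 + Complex.exp (Complex.I * x1) + Complex.exp (Complex.I * x2)) /
       (Real.sqrt (hexβ x1 x2) : ℂ))]

noncomputable def hexPinv (x1 x2 : ℝ) : Matrix (Fin 2) (Fin 2) ℂ :=
  !![1/2, (1 + Complex.exp (-(Complex.I * x1)) + Complex.exp (-(Complex.I * x2))) /
          (2 * (Real.sqrt (hexβ x1 x2) : ℂ));
     1/2, -((1 + Complex.exp (-(Complex.I * x1)) + Complex.exp (-(Complex.I * x2))) /
          (2 * (Real.sqrt (hexβ x1 x2) : ℂ)))]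

open ComplexConjugate

/-
With a := 1 + e^{i x1} + e^{i x2}, the other off-diagonal entry of 3F is b = conj a, and
β = |a|² = a b, so s := √β satisfies s² = a b. Over any field, s² = a b with s ≠ 0 makes
(1, s/b) and (1, -a/s) eigenvectors of [[0, b], [a, 0]] for ±s, and the claim becomes
2 × 2 algebra after substituting a = s²/b.
-/

section
variable {K : Type*} [Field K] {a b s : K}

lemma ne_zero_and_eq_mul_self_div (hsab : s * s = a * b) (hs : s ≠ 0) :
    b ≠ 0 ∧ a = s * s / b := by
  have hb : b ≠ 0 := by
    rintro rfl
    exact hs (mul_self_eq_zero.mp (by rw [hsab, mul_zero]))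
  exact ⟨hb, by rw [eq_div_iff hb, hsab]⟩

lemma antidiag_eigenbasis_mul_inv_eq_one (h2 : (2 : K) ≠ 0) (hsab : s * s = a * b)
    (hs : s ≠ 0) :
    !![1, 1; s / b, -(a / s)] * !![1 / 2, b / (2 * s); 1 / 2, -(b / (2 * s))] = 1 := by
  obtain ⟨hb, rfl⟩ := ne_zero_and_eq_mul_self_div hsab hs
  ext i j
  fin_cases i <;> fin_cases j <;> simp [Matrix.mul_apply, Fin.sum_univ_two] <;> field_simp <;> ring

lemma smul_antidiag_eq_eigenbasis_mul_diag_mul_inv (c : K) (h2 : (2 : K) ≠ 0)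
    (hsab : s * s = a * b) (hs : s ≠ 0) :
    c • !![0, b; a, 0] = !![1, 1; s / b, -(a / s)] * !![s * c, 0; 0, -(s * c)] *
      !![1 / 2, b / (2 * s); 1 / 2, -(b / (2 * s))] := by
  obtain ⟨hb, rfl⟩ := ne_zero_and_eq_mul_self_div hsab hs
  ext i j
  fin_cases i <;> fin_cases j <;> simp [Matrix.mul_apply, Fin.sum_univ_two] <;> field_simp <;> ring
end

lemma conj_one_add_exp_add_exp (x1 x2 : ℝ) :
    conj (1 + exp (I * x1) + exp (I * x2)) = 1 + exp (-(I * x1)) + exp (-(I * x2)) := by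
  simp only [map_add, map_one, ← exp_conj, map_mul, conj_I, conj_ofReal, neg_mul]

lemma normSq_one_add_exp_add_exp (x1 x2 : ℝ) :
    normSq (1 + exp (I * x1) + exp (I * x2)) =
      3 + 2 * (Real.cos x1 + Real.cos x2 + Real.cos (x1 - x2)) := by
  simp only [mul_comm I, normSq_apply, add_re, add_im, one_re, one_im, exp_ofReal_mul_I_re,
    exp_ofReal_mul_I_im, Real.cos_sub]
  linear_combination Real.sin_sq_add_cos_sq x1 + Real.sin_sq_add_cos_sq x2

theorem hexF_diagonalization (x1 x2 : ℝ) (hβ : hexβ x1 x2 ≠ 0) :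
    hexP x1 x2 * hexPinv x1 x2 = 1 ∧
    hexF x1 x2 = hexP x1 x2 * hexD x1 x2 * hexPinv x1 x2 := by
  set a : ℂ := 1 + exp (I * x1) + exp (I * x2)
  set s : ℂ := (Real.sqrt (hexβ x1 x2) : ℂ)
  have hβ_nonneg : 0 ≤ hexβ x1 x2 := by
    rw [hexβ, ← normSq_one_add_exp_add_exp]
    exact normSq_nonneg a
  have hs : s ≠ 0 := ofReal_ne_zero.mpr (Real.sqrt_ne_zero'.mpr (hβ_nonneg.lt_of_ne' hβ))
  have hsab : s * s = a * conj a := by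
    rw [mul_conj, normSq_one_add_exp_add_exp, ← ofReal_mul, Real.mul_self_sqrt hβ_nonneg, hexβ]
  rw [conj_one_add_exp_add_exp] at hsab
  refine ⟨antidiag_eigenbasis_mul_inv_eq_one two_ne_zero hsab hs, ?_⟩
  have hD : hexD x1 x2 = !![s * (1 / 3), 0; 0, -(s * (1 / 3))] := by
    simp only [hexD, mul_one_div, s]
  rw [hD]
  exact smul_antidiag_eq_eigenbasis_mul_diag_mul_inv (1 / 3) two_ne_zero hsab hs
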